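/- Let S(n,d) = ∑_{k=0}^{n-1} q^k [2k choose k+d]_q. For all n ≥ |d| (with d ≥ 0), S(n,d) - q^{4d+6} S(n,d+3) = q^d · ([2d+3]_q / [2n+1]_q) · [2n+1 choose n+d+2]_q, where [m]_q = (1-q^m)/(1-q). -/
import Mathlib


open Polynomial Finset

/-- The Gaussian (q-)binomial coefficient as a polynomial in `ℤ[q]`
(via the standard Pascal recursion `[n+1,k+1] = [n,k] + q^(k+1)·[n,k+1]`). -/
noncomputable def gbinom : ℕ → ℕ → Polynomial ℤ
  | _, 0 => 1
  | 0, _ + 1 => 0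
  | n + 1, k + 1 => gbinom n k + Polynomial.X ^ (k + 1) * gbinom n (k + 1)

/-- `S(n,d) = ∑_{k=0}^{n-1} q^k [2k, k+d]_q`. -/
noncomputable def S (n d : ℕ) : Polynomial ℤ :=
  ∑ k ∈ Finset.range n, Polynomial.X ^ k * gbinom (2 * k) (k + d)

/-- `[m]_q = 1 + q + ⋯ + q^(m-1)`. -/
noncomputable def qnum (m : ℕ) : Polynomial ℤ := ∑ i ∈ Finset.range m, Polynomial.X ^ i

lemma gb (m k : ℕ) : gbinom (m + 1) (k + 1) = gbinom m k + X ^ (k + 1) * gbinom m (k + 1) := by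
  rw [gbinom]

lemma gb' (m k : ℕ) {m' k' : ℕ} (hm : m' = m + 1) (hk : k' = k + 1) :
    gbinom m' k' = gbinom m k + X ^ k' * gbinom m k' := by
  subst hm; subst hk; exact gb m k

lemma gbinom_zero_of_lt : ∀ m k : ℕ, m < k → gbinom m k = 0 := by
  intro m
  induction m with
  | zero =>
    intro k hk
    match k, hk with
    | k + 1, _ => rw [gbinom]
  | succ m ih =>
    intro k hk
    match k, hk with
    | k + 1, hk =>
      rw [gb, ih k (by omega), ih (k + 1) (by omega), mul_zero, add_zero]

lemma gbinom_self : ∀ m : ℕ, gbinom m m = 1 := by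
  intro m
  induction m with
  | zero => rw [gbinom]
  | succ m ih =>
    rw [gb, ih, gbinom_zero_of_lt m (m + 1) (by omega), mul_zero, add_zero]

lemma qnum_zero : qnum 0 = 0 := by simp [qnum]

lemma qnum_one : qnum 1 = 1 := by simp [qnum]

lemma qnum_succ (m : ℕ) : qnum (m + 1) = qnum m + X ^ m :=
  Finset.sum_range_succ _ _

lemma qnum_succ' (m : ℕ) : qnum (m + 1) = 1 + X * qnum m := by
  induction m with
  | zero => simp [qnum]
  | succ m ih =>
    linear_combination qnum_succ (m + 1) + ih - (X : Polynomial ℤ) * qnum_succ m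

lemma qnum_mul (m : ℕ) : (X - 1) * qnum m = X ^ m - 1 := by
  induction m with
  | zero => simp [qnum]
  | succ m ih =>
    rw [qnum_succ]
    rw [pow_succ]
    linear_combination ih + (X ^ m : Polynomial ℤ) * (by ring : (X - 1 : Polynomial ℤ) * 1 = X - 1)

lemma gbinom_one : ∀ m : ℕ, gbinom m 1 = qnum m := by
  intro m
  induction m with
  | zero => rw [show (1 : ℕ) = 0 + 1 from rfl, gbinom, qnum_zero]
  | succ m ih =>
    have h := gb m 0
    rw [show (0 : ℕ) + 1 = 1 from rfl] at h
    rw [h, ih, gbinom]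
    rw [qnum_succ' m]
    ring

lemma gbinom_succ_self : ∀ m : ℕ, gbinom (m + 1) m = qnum (m + 1) := by
  intro m
  induction m with
  | zero => rw [gbinom, qnum_one]
  | succ m ih =>
    rw [gb, ih, gbinom_self, mul_one, qnum_succ (m + 1)]

lemma qrel : ∀ m k : ℕ, qnum (k + 1) * gbinom m (k + 1) = qnum (m - k) * gbinom m k := by
  intro m
  induction m with
  | zero =>
    intro k
    rw [gbinom, Nat.zero_sub, qnum_zero, zero_mul, mul_zero]
  | succ m ih =>
    intro k
    cases k with
    | zero =>
      rw [qnum_one, one_mul, gbinom_one, Nat.sub_zero]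
      rw [show gbinom (m + 1) 0 = 1 from by rw [gbinom], mul_one]
    | succ j =>
      rw [show m + 1 - (j + 1) = m - j by omega]
      by_cases hm : m ≤ j
      · rw [gbinom_zero_of_lt (m + 1) (j + 1 + 1) (by omega),
          show m - j = 0 by omega, qnum_zero, zero_mul, mul_zero]
      · obtain ⟨s, hs⟩ : ∃ s, m - j = s + 1 := ⟨m - j - 1, by omega⟩
        rw [hs, gb m (j + 1), gb m j]
        have ih1 := ih (j + 1)
        rw [show m - (j + 1) = s by omega] at ih1
        have ih0 := ih j
        rw [hs] at ih0
        linear_combination (X : Polynomial ℤ) ^ (j + 1 + 1) * ih1 + ih0 +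
          gbinom m (j + 1) * qnum_succ (j + 1) -
          X ^ (j + 1) * gbinom m (j + 1) * qnum_succ' s

lemma relP (m k : ℕ) :
    (X ^ (k + 1) - 1) * gbinom m (k + 1) = (X ^ (m - k) - 1) * gbinom m k := by
  linear_combination (X - 1 : Polynomial ℤ) * qrel m k -
    gbinom m (k + 1) * qnum_mul (k + 1) + gbinom m k * qnum_mul (m - k)

lemma relP' (m k : ℕ) {k' r : ℕ} (hk : k' = k + 1) (hr : r = m - k) :
    (X ^ k' - 1) * gbinom m k' = (X ^ r - 1) * gbinom m k := by
  subst hk; subst hr; exact relP m k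

lemma pne (m : ℕ) (hm : m ≠ 0) : (X ^ m - 1 : Polynomial ℤ) ≠ 0 := by
  intro h
  have h0 := congrArg (Polynomial.eval 0) h
  simp [zero_pow hm] at h0

lemma Xone_ne : (X - 1 : Polynomial ℤ) ≠ 0 := by
  intro h
  have h0 := congrArg (Polynomial.eval 0) h
  simp at h0

lemma starkey (n d : ℕ) (h : d ≤ n) :
    (X ^ (2 * n + 1) - 1) * (X ^ d * (X ^ (2 * d + 3) - 1)) * gbinom (2 * n + 3) (n + d + 3) =
      (X ^ (2 * n + 3) - 1) * (X ^ d * (X ^ (2 * d + 3) - 1)) * gbinom (2 * n + 1) (n + d + 2) +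
      (X ^ (2 * n + 1) - 1) * ((X ^ (2 * n + 3) - 1) * X ^ n) *
        (gbinom (2 * n) (n + d) - X ^ (4 * d + 6) * gbinom (2 * n) (n + d + 3)) := by
  obtain ⟨e, rfl⟩ : ∃ e, n = d + e := ⟨n - d, by omega⟩
  by_cases h0 : e = 0
  · subst h0
    have hA : gbinom (2 * (d + 0) + 3) (d + 0 + d + 3) = 1 := by
      rw [show d + 0 + d + 3 = 2 * (d + 0) + 3 by omega]; exact gbinom_self _
    have hB : gbinom (2 * (d + 0) + 1) (d + 0 + d + 2) = 0 :=
      gbinom_zero_of_lt _ _ (by omega)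
    have hC : gbinom (2 * (d + 0)) (d + 0 + d) = 1 := by
      rw [show d + 0 + d = 2 * (d + 0) by omega]; exact gbinom_self _
    have hD : gbinom (2 * (d + 0)) (d + 0 + d + 3) = 0 :=
      gbinom_zero_of_lt _ _ (by omega)
    rw [hA, hB, hC, hD]
    ring
  by_cases h1 : e = 1
  · subst h1
    have hA : gbinom (2 * (d + 1) + 3) (d + 1 + d + 3) = qnum (2 * d + 5) := by
      rw [show 2 * (d + 1) + 3 = 2 * d + 4 + 1 by omega, show d + 1 + d + 3 = 2 * d + 4 by omega,
        gbinom_succ_self, show 2 * d + 4 + 1 = 2 * d + 5 by omega]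
    have hB : gbinom (2 * (d + 1) + 1) (d + 1 + d + 2) = 1 := by
      rw [show d + 1 + d + 2 = 2 * (d + 1) + 1 by omega]; exact gbinom_self _
    have hC : gbinom (2 * (d + 1)) (d + 1 + d) = qnum (2 * d + 2) := by
      rw [show 2 * (d + 1) = 2 * d + 1 + 1 by omega, show d + 1 + d = 2 * d + 1 by omega,
        gbinom_succ_self, show 2 * d + 1 + 1 = 2 * d + 2 by omega]
    have hD : gbinom (2 * (d + 1)) (d + 1 + d + 3) = 0 :=
      gbinom_zero_of_lt _ _ (by omega)
    rw [hA, hB, hC, hD]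
    apply mul_left_cancel₀ Xone_ne
    linear_combination ((X ^ (2 * (d + 1) + 1) - 1) * (X ^ d * (X ^ (2 * d + 3) - 1)) : Polynomial ℤ) *
        qnum_mul (2 * d + 5) -
      ((X ^ (2 * (d + 1) + 1) - 1) * ((X ^ (2 * (d + 1) + 3) - 1) * X ^ (d + 1)) : Polynomial ℤ) *
        qnum_mul (2 * d + 2)
  obtain ⟨f, rfl⟩ : ∃ f, e = f + 2 := ⟨e - 2, by omega⟩
  rw [show 2 * (d + (f + 2)) + 3 = 2 * d + 2 * f + 7 by omega,
    show 2 * (d + (f + 2)) + 1 = 2 * d + 2 * f + 5 by omega,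
    show 2 * (d + (f + 2)) = 2 * d + 2 * f + 4 by omega,
    show d + (f + 2) + d + 3 = 2 * d + f + 5 by omega,
    show d + (f + 2) + d + 2 = 2 * d + f + 4 by omega,
    show d + (f + 2) + d = 2 * d + f + 2 by omega,
    show d + (f + 2) = d + f + 2 by omega]
  have q1 : gbinom (2 * d + 2 * f + 7) (2 * d + f + 5) =
      gbinom (2 * d + 2 * f + 6) (2 * d + f + 4) +
        X ^ (2 * d + f + 5) * gbinom (2 * d + 2 * f + 6) (2 * d + f + 5) :=
    gb' (2 * d + 2 * f + 6) (2 * d + f + 4) (by omega) (by omega)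
  have q2a : gbinom (2 * d + 2 * f + 6) (2 * d + f + 4) =
      gbinom (2 * d + 2 * f + 5) (2 * d + f + 3) +
        X ^ (2 * d + f + 4) * gbinom (2 * d + 2 * f + 5) (2 * d + f + 4) :=
    gb' (2 * d + 2 * f + 5) (2 * d + f + 3) (by omega) (by omega)
  have q2b : gbinom (2 * d + 2 * f + 6) (2 * d + f + 5) =
      gbinom (2 * d + 2 * f + 5) (2 * d + f + 4) +
        X ^ (2 * d + f + 5) * gbinom (2 * d + 2 * f + 5) (2 * d + f + 5) :=
    gb' (2 * d + 2 * f + 5) (2 * d + f + 4) (by omega) (by omega)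
  have q3a : gbinom (2 * d + 2 * f + 5) (2 * d + f + 3) =
      gbinom (2 * d + 2 * f + 4) (2 * d + f + 2) +
        X ^ (2 * d + f + 3) * gbinom (2 * d + 2 * f + 4) (2 * d + f + 3) :=
    gb' (2 * d + 2 * f + 4) (2 * d + f + 2) (by omega) (by omega)
  have q3b : gbinom (2 * d + 2 * f + 5) (2 * d + f + 4) =
      gbinom (2 * d + 2 * f + 4) (2 * d + f + 3) +
        X ^ (2 * d + f + 4) * gbinom (2 * d + 2 * f + 4) (2 * d + f + 4) :=
    gb' (2 * d + 2 * f + 4) (2 * d + f + 3) (by omega) (by omega)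
  have q3c : gbinom (2 * d + 2 * f + 5) (2 * d + f + 5) =
      gbinom (2 * d + 2 * f + 4) (2 * d + f + 4) +
        X ^ (2 * d + f + 5) * gbinom (2 * d + 2 * f + 4) (2 * d + f + 5) :=
    gb' (2 * d + 2 * f + 4) (2 * d + f + 4) (by omega) (by omega)
  rw [q1, q2a, q2b, q3a, q3b, q3c]
  have h1 : (X ^ (2 * d + f + 3) - 1) * gbinom (2 * d + 2 * f + 4) (2 * d + f + 3) =
      (X ^ (f + 2) - 1) * gbinom (2 * d + 2 * f + 4) (2 * d + f + 2) :=
    relP' (2 * d + 2 * f + 4) (2 * d + f + 2) (by omega) (by omega)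
  have h2 : (X ^ (2 * d + f + 4) - 1) * gbinom (2 * d + 2 * f + 4) (2 * d + f + 4) =
      (X ^ (f + 1) - 1) * gbinom (2 * d + 2 * f + 4) (2 * d + f + 3) :=
    relP' (2 * d + 2 * f + 4) (2 * d + f + 3) (by omega) (by omega)
  have h3 : (X ^ (2 * d + f + 5) - 1) * gbinom (2 * d + 2 * f + 4) (2 * d + f + 5) =
      (X ^ f - 1) * gbinom (2 * d + 2 * f + 4) (2 * d + f + 4) :=
    relP' (2 * d + 2 * f + 4) (2 * d + f + 4) (by omega) (by omega)
  have hPm : ((X : Polynomial ℤ) ^ (2 * d + f + 3) - 1) *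
      (((X : Polynomial ℤ) ^ (2 * d + f + 4) - 1) * ((X : Polynomial ℤ) ^ (2 * d + f + 5) - 1)) ≠ 0 :=
    mul_ne_zero (pne _ (by omega)) (mul_ne_zero (pne _ (by omega)) (pne _ (by omega)))
  apply mul_left_cancel₀ hPm
  linear_combination
    (((X : Polynomial ℤ) ^ (2 * d + f + 3) - 1) * ((X ^ (2 * d + f + 4) - 1) * (X ^ (2 * d + f + 5) - 1)) *
      ((X ^ (2 * d + 2 * f + 5) - 1) * X ^ d *
        (X ^ (2 * d + 3) * (X ^ (2 * f + 4) + X ^ (f + 2) + 1) - 1))) * h1 +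
    (((X : Polynomial ℤ) ^ (2 * d + f + 3) - 1) * ((X ^ (2 * d + f + 4) - 1) * (X ^ (2 * d + f + 5) - 1)) *
      (X ^ (3 * d + f + 4) - X ^ (5 * d + f + 7) - X ^ (5 * d + f + 8) + X ^ (5 * d + 2 * f + 8) -
        X ^ (5 * d + 2 * f + 9) - X ^ (5 * d + 2 * f + 10) - X ^ (5 * d + 3 * f + 11) +
        X ^ (7 * d + 3 * f + 12) + X ^ (7 * d + 3 * f + 13) + X ^ (7 * d + 4 * f + 14))) * h2 +
    (((X : Polynomial ℤ) ^ (2 * d + f + 3) - 1) * ((X : Polynomial ℤ) ^ (2 * d + f + 4) - 1) *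
      ((X ^ (2 * d + 2 * f + 5) - 1) * X ^ d * (X ^ (2 * d + 3) - 1) * X ^ (6 * d + 3 * f + 15) +
        (X ^ (2 * d + 2 * f + 5) - 1) * (X ^ (2 * d + 2 * f + 7) - 1) * X ^ (5 * d + f + 8))) * h3

lemma mainP : ∀ e d : ℕ,
    (X ^ (2 * (d + e) + 1) - 1) * (S (d + e) d - X ^ (4 * d + 6) * S (d + e) (d + 3)) =
      X ^ d * (X ^ (2 * d + 3) - 1) * gbinom (2 * (d + e) + 1) (d + e + d + 2) := by
  intro e
  induction e with
  | zero =>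
    intro d
    have z1 : S (d + 0) d = 0 := by
      simp only [S]
      apply Finset.sum_eq_zero
      intro k hk
      have hk' := Finset.mem_range.mp hk
      rw [gbinom_zero_of_lt (2 * k) (k + d) (by omega), mul_zero]
    have z2 : S (d + 0) (d + 3) = 0 := by
      simp only [S]
      apply Finset.sum_eq_zero
      intro k hk
      have hk' := Finset.mem_range.mp hk
      rw [gbinom_zero_of_lt (2 * k) (k + (d + 3)) (by omega), mul_zero]
    have z3 : gbinom (2 * (d + 0) + 1) (d + 0 + d + 2) = 0 :=
      gbinom_zero_of_lt _ _ (by omega)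
    rw [z1, z2, z3]
    ring
  | succ e ih =>
    intro d
    rw [show d + (e + 1) = d + e + 1 by omega]
    have hS1 : S (d + e + 1) d = S (d + e) d + X ^ (d + e) * gbinom (2 * (d + e)) (d + e + d) :=
      Finset.sum_range_succ _ _
    have hS3 : S (d + e + 1) (d + 3) =
        S (d + e) (d + 3) + X ^ (d + e) * gbinom (2 * (d + e)) (d + e + (d + 3)) :=
      Finset.sum_range_succ _ _
    rw [show d + e + (d + 3) = d + e + d + 3 by omega] at hS3
    rw [hS1, hS3,
      show 2 * (d + e + 1) + 1 = 2 * (d + e) + 3 by omega,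
      show d + e + 1 + d + 2 = d + e + d + 3 by omega]
    apply mul_left_cancel₀ (pne (2 * (d + e) + 1) (by omega))
    linear_combination ((X : Polynomial ℤ) ^ (2 * (d + e) + 3) - 1) * ih d -
      starkey (d + e) d (Nat.le_add_right d e)

/-- For `n ≥ d ≥ 0`:
`S(n,d) - q^(4d+6) S(n,d+3) = q^d ([2d+3]_q/[2n+1]_q) [2n+1, n+d+2]_q`,
stated with the denominator `[2n+1]_q` cleared. -/
theorem stmt_18 (n d : ℕ) (hd : d ≤ n) :
    qnum (2 * n + 1) * (S n d - Polynomial.X ^ (4 * d + 6) * S n (d + 3)) =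
      Polynomial.X ^ d * qnum (2 * d + 3) * gbinom (2 * n + 1) (n + d + 2) := by
  obtain ⟨e, rfl⟩ : ∃ e, n = d + e := ⟨n - d, by omega⟩
  apply mul_left_cancel₀ Xone_ne
  linear_combination (S (d + e) d - (X : Polynomial ℤ) ^ (4 * d + 6) * S (d + e) (d + 3)) *
      qnum_mul (2 * (d + e) + 1) -
    ((X : Polynomial ℤ) ^ d * gbinom (2 * (d + e) + 1) (d + e + d + 2)) * qnum_mul (2 * d + 3) +
    mainP e d
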